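/- arXiv:2404.08290 — 3 statements merged into one kernel-verified Lean document; each statement's English description precedes it below -/
import Mathlib

section
/- Let T > 0, δ > 0, let u : [0,T] → [0,δ] be a piecewise constant function, let a > δ, and fix an integer k ≥ 1. For h = 0, …, k−1 set I_h = [hT/k, (h+1)T/k) and U_h = ∫_{I_h} u(s) ds, and define w : [0,T) → ℝ by w(t) = a if t ∈ [(h+1)T/k − U_h/a, (h+1)T/k) for some h, and w(t) = 0 otherwise. Then w is well defined and takes values in {0,a} (i.e. U_h/a ≤ T/k for every h), ∫_{I_h} w(s) ds = U_h for every h = 0, …, k−1, ∫_0^T |w(s)| ds ≤ ∫_0^T |u(s)| ds, and |∫_0^t w(s) ds − ∫_0^t u(s) ds| ≤ (δ + a) T / k for every t ∈ [0,T]. -/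
/-!
Split `[0, T]` into the blocks `I_h`. On `I_h` the control `w` vanishes and then equals `a` on a
final subinterval of length `U_h / a`; this fits in `I_h` because `U_h ≤ δ T / k < a T / k`.
So `w` and `u` have the same integral over every block, and their primitives agree at every grid
point. Inside a block both primitives are nondecreasing (`u, w ≥ 0`) and gain `U_h` over the block,
so they differ by at most `U_h ≤ δ T / k`.
-/

open scoped Classical

/-- A function `f` is piecewise constant on `[0,T]` if there is a finite partition
`0 = t_0 < t_1 < … < t_m = T` such that `f` is constant on each interval `[t_{j-1}, t_j)`. -/
def PiecewiseConstOn (f : ℝ → ℝ) (T : ℝ) : Prop :=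
  ∃ (m : ℕ) (t : ℕ → ℝ), 0 < m ∧ t 0 = 0 ∧ t m = T ∧
    (∀ j < m, t j < t (j + 1)) ∧
    ∀ j < m, ∀ x ∈ Set.Ico (t j) (t (j + 1)), f x = f (t j)

open MeasureTheory Set

theorem PiecewiseConstOn.intervalIntegrable {f : ℝ → ℝ} {T : ℝ} (hf : PiecewiseConstOn f T) :
    IntervalIntegrable f volume 0 T := by
  obtain ⟨m, t, -, ht0, htm, hlt, hconst⟩ := hf
  rw [← ht0, ← htm]
  refine IntervalIntegrable.trans_iterate fun j hj => ?_
  rw [intervalIntegrable_iff_integrableOn_Ico_of_le (hlt j hj).le]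
  exact (integrableOn_const measure_Ico_lt_top.ne).congr_fun
    (fun x hx => (hconst j hj x hx).symm) measurableSet_Ico

theorem IntervalIntegrable.of_mem_Icc {f : ℝ → ℝ} {μ : Measure ℝ} {a b x y : ℝ}
    (hf : IntervalIntegrable f μ a b) (hx : x ∈ Icc a b) (hy : y ∈ Icc a b) :
    IntervalIntegrable f μ x y :=
  hf.mono_set (uIcc_subset_uIcc (Icc_subset_uIcc hx) (Icc_subset_uIcc hy))

theorem Monotone.exists_mem_Icc_add_one {p : ℕ → ℝ} (hp : Monotone p) {n : ℕ} (hn : 0 < n)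
    {t : ℝ} (ht : t ∈ Icc (p 0) (p n)) : ∃ i < n, t ∈ Icc (p i) (p (i + 1)) := by
  rcases ht.1.eq_or_lt with rfl | h0
  · exact ⟨0, hn, le_rfl, hp (Nat.zero_le 1)⟩
  · have : t ∈ ⋃ i ∈ Ico 0 n, Ioc (p i) (p (Order.succ i)) := by
      rw [hp.biUnion_Ico_Ioc_map_succ]; exact ⟨h0, ht.2⟩
    simp only [mem_iUnion, mem_Ico, Order.succ_eq_add_one] at this
    obtain ⟨i, ⟨-, hi⟩, hti⟩ := this
    exact ⟨i, hi, Ioc_subset_Icc_self hti⟩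

theorem integral_mem_Icc_zero_mul_of_forall_mem_Icc {f : ℝ → ℝ} {l r δ : ℝ} (hlr : l ≤ r)
    (hf : ∀ x ∈ Icc l r, f x ∈ Icc 0 δ) : ∫ x in l..r, f x ∈ Icc 0 (δ * (r - l)) := by
  refine ⟨intervalIntegral.integral_nonneg hlr fun x hx => (hf x hx).1, ?_⟩
  have hnorm : ∀ x ∈ uIoc l r, ‖f x‖ ≤ δ := fun x hx => by
    obtain ⟨h0, hδ⟩ := hf x (Ioc_subset_Icc_self (uIoc_of_le hlr ▸ hx))
    rwa [Real.norm_of_nonneg h0]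
  calc ∫ x in l..r, f x ≤ ‖∫ x in l..r, f x‖ := Real.le_norm_self _
    _ ≤ δ * |r - l| := intervalIntegral.norm_integral_le_of_norm_le_const hnorm
    _ = δ * (r - l) := by rw [abs_of_nonneg (sub_nonneg.2 hlr)]

theorem integral_eq_of_forall_integral_block_eq {f g : ℝ → ℝ} {p : ℕ → ℝ} {n : ℕ}
    (hp : Monotone p) (hf : IntervalIntegrable f volume (p 0) (p n))
    (hg : IntervalIntegrable g volume (p 0) (p n))
    (hfg : ∀ i < n, ∫ x in p i..p (i + 1), f x = ∫ x in p i..p (i + 1), g x) :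
    ∫ x in p 0..p n, f x = ∫ x in p 0..p n, g x := by
  have hmem : ∀ i ≤ n, p i ∈ Icc (p 0) (p n) := fun i hi => ⟨hp i.zero_le, hp hi⟩
  rw [← intervalIntegral.sum_integral_adjacent_intervals
      fun i hi => hf.of_mem_Icc (hmem i hi.le) (hmem (i + 1) hi),
    ← intervalIntegral.sum_integral_adjacent_intervals
      fun i hi => hg.of_mem_Icc (hmem i hi.le) (hmem (i + 1) hi)]
  exact Finset.sum_congr rfl fun i hi => hfg i (Finset.mem_range.1 hi)

theorem integral_mem_Icc_zero_integral_of_nonneg {f : ℝ → ℝ} {l r t : ℝ}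
    (hf : IntervalIntegrable f volume l r) (hf0 : ∀ x ∈ Icc l r, 0 ≤ f x) (ht : t ∈ Icc l r) :
    ∫ x in l..t, f x ∈ Icc 0 (∫ x in l..r, f x) :=
  ⟨intervalIntegral.integral_nonneg ht.1 fun x hx => hf0 x ⟨hx.1, hx.2.trans ht.2⟩,
    intervalIntegral.integral_mono_interval le_rfl ht.1 ht.2
      ((ae_restrict_iff' measurableSet_Ioc).2 (.of_forall fun x hx =>
        hf0 x (Ioc_subset_Icc_self hx))) hf⟩

theorem abs_integral_sub_le_of_integral_block_eq {f g : ℝ → ℝ} {p : ℕ → ℝ} {n : ℕ} {M : ℝ}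
    (hp : Monotone p) (hn : 0 < n)
    (hf : IntervalIntegrable f volume (p 0) (p n)) (hg : IntervalIntegrable g volume (p 0) (p n))
    (hf0 : ∀ x ∈ Icc (p 0) (p n), 0 ≤ f x) (hg0 : ∀ x ∈ Icc (p 0) (p n), 0 ≤ g x)
    (hfg : ∀ i < n, ∫ x in p i..p (i + 1), f x = ∫ x in p i..p (i + 1), g x)
    (hM : ∀ i < n, ∫ x in p i..p (i + 1), g x ≤ M) {t : ℝ} (ht : t ∈ Icc (p 0) (p n)) :
    |(∫ x in p 0..t, f x) - ∫ x in p 0..t, g x| ≤ M := by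
  obtain ⟨i, hi, hti⟩ := hp.exists_mem_Icc_add_one hn ht
  have hmem : ∀ j ≤ n, p j ∈ Icc (p 0) (p n) := fun j hj => ⟨hp j.zero_le, hp hj⟩
  have hblock : Icc (p i) (p (i + 1)) ⊆ Icc (p 0) (p n) :=
    Icc_subset_Icc (hmem i hi.le).1 (hmem _ hi).2
  have hsplit : ∀ φ : ℝ → ℝ, IntervalIntegrable φ volume (p 0) (p n) →
      ∫ x in p 0..t, φ x = (∫ x in p 0..p i, φ x) + ∫ x in p i..t, φ x := fun φ hφ =>
    (intervalIntegral.integral_add_adjacent_intervals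
      (hφ.of_mem_Icc (hmem 0 n.zero_le) (hmem i hi.le))
      (hφ.of_mem_Icc (hmem i hi.le) (hblock hti))).symm
  have hprefix : ∫ x in p 0..p i, f x = ∫ x in p 0..p i, g x :=
    integral_eq_of_forall_integral_block_eq hp (hf.of_mem_Icc (hmem 0 n.zero_le) (hmem i hi.le))
      (hg.of_mem_Icc (hmem 0 n.zero_le) (hmem i hi.le)) fun j hj => hfg j (hj.trans hi)
  have hF := integral_mem_Icc_zero_integral_of_nonneg (hf.of_mem_Icc (hmem i hi.le) (hmem _ hi))
    (fun x hx => hf0 x (hblock hx)) hti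
  have hG := integral_mem_Icc_zero_integral_of_nonneg (hg.of_mem_Icc (hmem i hi.le) (hmem _ hi))
    (fun x hx => hg0 x (hblock hx)) hti
  rw [hfg i hi] at hF
  rw [hsplit f hf, hsplit g hg, hprefix, add_sub_add_left_eq_sub]
  exact (abs_sub_le_of_nonneg_of_le hF.1 hF.2 hG.1 hG.2).trans (hM i hi)

def bangBangSet (k : ℕ) (p U : ℕ → ℝ) (a : ℝ) : Set ℝ :=
  {t | ∃ h < k, p (h + 1) - U h / a ≤ t ∧ t < p (h + 1)}

section BangBang

variable {k : ℕ} {p U : ℕ → ℝ} {a : ℝ}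

theorem measurableSet_bangBangSet : MeasurableSet (bangBangSet k p U a) := by
  simp only [bangBangSet, ofPred_exists]
  exact .iUnion fun h => (MeasurableSet.const (h < k)).inter measurableSet_Ico

theorem bangBangSet_inter_Ico (hp : Monotone p) (hU : ∀ j < k, U j / a ≤ p (j + 1) - p j)
    {h : ℕ} (hh : h < k) :
    bangBangSet k p U a ∩ Ico (p h) (p (h + 1)) = Ico (p (h + 1) - U h / a) (p (h + 1)) := by
  have hstart : ∀ j < k, p j ≤ p (j + 1) - U j / a := fun j hj => by linarith [hU j hj]
  ext t
  constructor
  · rintro ⟨⟨j, hj, hjt, htj⟩, hpt, htp⟩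
    rcases lt_trichotomy j h with hjh | rfl | hhj
    · exact absurd (htj.trans_le (hp hjh)) hpt.not_gt
    · exact ⟨hjt, htj⟩
    · exact absurd ((hp hhj).trans ((hstart j hj).trans hjt)) htp.not_ge
  · rintro ⟨hht, htp⟩
    exact ⟨⟨h, hh, hht, htp⟩, (hstart h hh).trans hht, htp⟩

theorem integral_indicator_bangBangSet (hp : Monotone p) (ha : a ≠ 0)
    (hU : ∀ j < k, U j / a ∈ Icc 0 (p (j + 1) - p j)) {h : ℕ} (hh : h < k) :
    ∫ t in p h..p (h + 1), (bangBangSet k p U a).indicator (fun _ => a) t = U h := by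
  rw [intervalIntegral.integral_of_le (hp h.le_succ), integral_Ioc_eq_integral_Ioo,
    ← integral_Ico_eq_integral_Ioo, setIntegral_indicator measurableSet_bangBangSet, inter_comm,
    bangBangSet_inter_Ico hp (fun j hj => (hU j hj).2) hh, setIntegral_const, measureReal_def,
    Real.volume_Ico, sub_sub_cancel, ENNReal.toReal_ofReal (hU h hh).1, smul_eq_mul,
    div_mul_cancel₀ _ ha]

end BangBang

noncomputable def uniformGrid (T : ℝ) (k i : ℕ) : ℝ := i * T / k

theorem uniformGrid_apply (T : ℝ) (k i : ℕ) : uniformGrid T k i = i * T / k := rfl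

theorem uniformGrid_add_one (T : ℝ) (k i : ℕ) :
    uniformGrid T k (i + 1) = ((i : ℝ) + 1) * T / k := by
  simp [uniformGrid]

theorem uniformGrid_zero (T : ℝ) (k : ℕ) : uniformGrid T k 0 = 0 := by simp [uniformGrid]

theorem uniformGrid_self (T : ℝ) {k : ℕ} (hk : k ≠ 0) : uniformGrid T k k = T := by
  simp [uniformGrid, hk]

theorem uniformGrid_add_one_sub (T : ℝ) (k i : ℕ) :
    uniformGrid T k (i + 1) - uniformGrid T k i = T / k := by
  simp only [uniformGrid]; push_cast; ring

theorem monotone_uniformGrid {T : ℝ} (hT : 0 ≤ T) (k : ℕ) : Monotone (uniformGrid T k) :=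
  fun i j hij => by simp only [uniformGrid]; gcongr

/-- explicit bang-bang approximation on a uniform partition into `k` pieces. -/
theorem bang_bang_explicit
    (T δ a : ℝ) (hT : 0 < T) (hδ : 0 < δ) (ha : δ < a)
    (u : ℝ → ℝ) (hu : PiecewiseConstOn u T)
    (hurange : ∀ t ∈ Set.Icc (0 : ℝ) T, u t ∈ Set.Icc (0 : ℝ) δ)
    (k : ℕ) (hk : 1 ≤ k)
    (U : ℕ → ℝ)
    (hU : ∀ h : ℕ, U h = ∫ s in ((h : ℝ) * T / k)..(((h : ℝ) + 1) * T / k), u s)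
    (w : ℝ → ℝ)
    (hw : ∀ t : ℝ, w t =
      if ∃ h : ℕ, h < k ∧ ((h : ℝ) + 1) * T / k - U h / a ≤ t ∧ t < ((h : ℝ) + 1) * T / k
      then a else 0) :
    (∀ h : ℕ, h < k → U h / a ≤ T / k) ∧
    (∀ t : ℝ, w t ∈ ({0, a} : Set ℝ)) ∧
    (∀ h : ℕ, h < k → (∫ s in ((h : ℝ) * T / k)..(((h : ℝ) + 1) * T / k), w s) = U h) ∧
    ((∫ s in (0 : ℝ)..T, |w s|) ≤ ∫ s in (0 : ℝ)..T, |u s|) ∧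
    (∀ t ∈ Set.Icc (0 : ℝ) T,
      |(∫ s in (0 : ℝ)..t, w s) - ∫ s in (0 : ℝ)..t, u s| ≤ (δ + a) * T / k) := by
  have ha0 : 0 < a := hδ.trans ha
  simp only [← uniformGrid_add_one, ← uniformGrid_apply] at hU hw ⊢
  set p := uniformGrid T k
  have hp : Monotone p := monotone_uniformGrid hT.le k
  have hp_ends : p 0 = 0 ∧ p k = T := ⟨uniformGrid_zero T k, uniformGrid_self T (by omega)⟩
  have hu_int : IntervalIntegrable u volume (p 0) (p k) := by
    rw [hp_ends.1, hp_ends.2]; exact hu.intervalIntegrable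
  have hu_mem : ∀ x ∈ Icc (p 0) (p k), u x ∈ Icc 0 δ := by rw [hp_ends.1, hp_ends.2]; exact hurange
  have hU_mem : ∀ h < k, U h ∈ Icc 0 (δ * (T / k)) := fun h hh => by
    rw [hU, ← uniformGrid_add_one_sub]
    exact integral_mem_Icc_zero_mul_of_forall_mem_Icc (hp h.le_succ) fun x hx =>
      hu_mem x (Icc_subset_Icc (hp h.zero_le) (hp hh) hx)
  have hUa : ∀ h < k, U h / a ∈ Icc 0 (p (h + 1) - p h) := fun h hh => by
    refine ⟨div_nonneg (hU_mem h hh).1 ha0.le, ?_⟩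
    rw [uniformGrid_add_one_sub, div_le_iff₀' ha0]
    exact (hU_mem h hh).2.trans (by gcongr)
  have hw_eq : w = (bangBangSet k p U a).indicator fun _ => a := funext fun t => by
    rw [hw t, indicator_apply]; congr
  have hw_nonneg : ∀ t, 0 ≤ w t := hw_eq ▸ indicator_nonneg fun _ _ => ha0.le
  have hw_int : ∀ x y, IntervalIntegrable w volume x y := fun x y => hw_eq ▸
    intervalIntegrable_iff.2 ((integrableOn_const measure_Ioc_lt_top.ne).indicator
      measurableSet_bangBangSet)
  have hw_block : ∀ h < k, ∫ s in p h..p (h + 1), w s = U h := fun h hh => by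
    rw [hw_eq]; exact integral_indicator_bangBangSet hp ha0.ne' hUa hh
  have hw_eq_u : ∀ h < k, ∫ s in p h..p (h + 1), w s = ∫ s in p h..p (h + 1), u s :=
    fun h hh => (hw_block h hh).trans (hU h)
  refine ⟨fun h hh => (hUa h hh).2.trans_eq (uniformGrid_add_one_sub T k h), fun t => ?_,
    hw_block, ?_, fun t ht => ?_⟩
  · rw [hw t]; split_ifs <;> simp
  · rw [intervalIntegral.integral_congr fun s _ => abs_of_nonneg (hw_nonneg s),
      intervalIntegral.integral_congr fun s hs =>
        abs_of_nonneg (hurange s (uIcc_of_le hT.le ▸ hs)).1,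
      ← hp_ends.1, ← hp_ends.2]
    exact (integral_eq_of_forall_integral_block_eq hp (hw_int _ _) hu_int hw_eq_u).le
  · have hdist := abs_integral_sub_le_of_integral_block_eq hp hk (hw_int _ _) hu_int
      (fun x _ => hw_nonneg x) (fun x hx => (hu_mem x hx).1) hw_eq_u
      (fun h hh => (hU h).symm.trans_le (hU_mem h hh).2) (p := p) (t := t)
      (by rwa [hp_ends.1, hp_ends.2])
    rw [hp_ends.1] at hdist
    calc _ ≤ δ * (T / k) := hdist
      _ ≤ (δ + a) * (T / k) := by gcongr; linarith
      _ = (δ + a) * T / k := by ring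
end

section
/- Let T > 0, δ > 0, a > δ, and fix an integer k ≥ 1. For a piecewise constant function u : [0,T] → [0,δ], define w_u : [0,T) → ℝ by w_u(t) = a if t ∈ [(h+1)T/k − U_h(u)/a, (h+1)T/k) for some h ∈ {0,…,k−1}, where U_h(u) = ∫_{hT/k}^{(h+1)T/k} u(s) ds, and w_u(t) = 0 otherwise. Then for any two piecewise constant functions u, u' : [0,T] → [0,δ] one has ∫_0^T |w_u(s) − w_{u'}(s)| ds ≤ ∫_0^T |u(s) − u'(s)| ds; in particular, the map u ↦ w_u is 1-Lipschitz, hence continuous, for the L¹ topology. -/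
/-!
On the piece `[t_h, t_{h+1})`, `t_j = jT/k`, the function `w_u` is `a` times the indicator
of `[c_h, t_{h+1})` with switching time `c_h = t_{h+1} - U_h(u)/a`; the bound
`U_h(u) ≤ δT/k ≤ aT/k` keeps `c_h` inside the piece. So on that piece `|w_u - w_{u'}|` is `a`
times the indicator of the interval between `c_h` and `c'_h`, whose integral is
`a |c_h - c'_h| = |U_h(u) - U_h(u')| ≤ ∫_{t_h}^{t_{h+1}} |u - u'|`. Summing over the pieces
gives the claim.
-/

open scoped Classical

/-- The bang-bang approximation `w_u` of a control `u` on the uniform partition of `[0,T)`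
into `k` pieces: on each piece `I_h = [hT/k, (h+1)T/k)` it equals `a` on the final
subinterval of length `U_h(u)/a`, where `U_h(u) = ∫_{I_h} u`, and `0` elsewhere. -/
noncomputable def bangBang (T a : ℝ) (k : ℕ) (u : ℝ → ℝ) : ℝ → ℝ := fun t =>
  if ∃ h : ℕ, h < k ∧
      ((h : ℝ) + 1) * T / k - (∫ s in ((h : ℝ) * T / k)..(((h : ℝ) + 1) * T / k), u s) / a ≤ t ∧
      t < ((h : ℝ) + 1) * T / k
  then a else 0

open MeasureTheory Set

theorem intervalIntegral_congr_Ico {E : Type*} [NormedAddCommGroup E] [NormedSpace ℝ E]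
    {f g : ℝ → E} {p q : ℝ} (hpq : p ≤ q) (h : EqOn f g (Ico p q)) :
    ∫ t in p..q, f t = ∫ t in p..q, g t := by
  simp only [intervalIntegral.integral_of_le hpq, ← integral_Ico_eq_integral_Ioc,
    setIntegral_congr_fun measurableSet_Ico h]

theorem intervalIntegral_indicator_Ico_const {E : Type*} [NormedAddCommGroup E]
    [NormedSpace ℝ E] [CompleteSpace E] {p q m M : ℝ} (hpm : p ≤ m) (hmM : m ≤ M) (hMq : M ≤ q)
    (A : E) :
    ∫ t in p..q, (Ico m M).indicator (fun _ => A) t = (M - m) • A := by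
  rw [intervalIntegral.integral_of_le (hpm.trans (hmM.trans hMq)),
    ← integral_Ico_eq_integral_Ioc, setIntegral_indicator measurableSet_Ico,
    inter_eq_right.mpr (Ico_subset_Ico hpm hMq), setIntegral_const,
    Real.volume_real_Ico_of_le hmM]

theorem abs_ite_sub_ite_eq_indicator {c c' a t : ℝ} (ha : 0 ≤ a) :
    |(if c ≤ t then a else 0) - (if c' ≤ t then a else 0)| =
      (Ico (min c c') (max c c')).indicator (fun _ => a) t := by
  rcases le_or_gt c t with h | h <;> rcases le_or_gt c' t with h' | h' <;>
    simp [indicator, h, h', not_le.2, abs_of_nonneg ha]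

theorem integral_abs_ite_sub_ite {p q c c' a : ℝ} (hc : c ∈ Icc p q) (hc' : c' ∈ Icc p q)
    (ha : 0 ≤ a) :
    ∫ t in p..q, |(if c ≤ t then a else 0) - (if c' ≤ t then a else 0)| = a * |c - c'| := by
  simp only [abs_ite_sub_ite_eq_indicator ha]
  rw [intervalIntegral_indicator_Ico_const (le_min hc.1 hc'.1) min_le_max (max_le hc.2 hc'.2),
    max_sub_min_eq_abs', smul_eq_mul, mul_comm]

theorem mem_biUnion_Ico_iff_of_mem_Ico {α : Type*} [LinearOrder α] {b c : ℕ → α} {k h : ℕ}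
    {t : α} (hb : Monotone b) (hbc : ∀ j < k, b j ≤ c j) (hh : h < k)
    (ht : t ∈ Ico (b h) (b (h + 1))) :
    t ∈ ⋃ j ∈ Finset.range k, Ico (c j) (b (j + 1)) ↔ c h ≤ t := by
  simp only [mem_iUnion, Finset.mem_range, mem_Ico, exists_prop]
  refine ⟨fun ⟨j, hj, hcj, htj⟩ => ?_, fun hct => ⟨h, hh, hct, ht.2⟩⟩
  obtain rfl : j = h := by
    rcases lt_trichotomy j h with hjh | rfl | hhj
    · exact absurd (htj.trans_le (hb hjh)) ht.1.not_gt
    · rfl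
    · exact absurd ((hb hhj).trans ((hbc j hj).trans hcj)) ht.2.not_ge
  exact hcj

noncomputable def gridPoint (T : ℝ) (k j : ℕ) : ℝ := j * T / k

/-- `U_j(v)` in the notation of the statement. -/
noncomputable def pieceIntegral (T : ℝ) (k : ℕ) (v : ℝ → ℝ) (j : ℕ) : ℝ :=
  ∫ s in gridPoint T k j..gridPoint T k (j + 1), v s

noncomputable def switchTime (T a : ℝ) (k : ℕ) (v : ℝ → ℝ) (j : ℕ) : ℝ :=
  gridPoint T k (j + 1) - pieceIntegral T k v j / a

section Grid

variable {T : ℝ} {k : ℕ}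

theorem gridPoint_zero : gridPoint T k 0 = 0 := by simp [gridPoint]

theorem gridPoint_self (hk : k ≠ 0) : gridPoint T k k = T := by
  simp [gridPoint, hk]

theorem gridPoint_succ_sub (j : ℕ) : gridPoint T k (j + 1) - gridPoint T k j = T / k := by
  simp only [gridPoint]; push_cast; ring

theorem gridPoint_mono (hT : 0 ≤ T) : Monotone (gridPoint T k) := fun i j hij => by
  unfold gridPoint; gcongr

theorem Icc_gridPoint_subset (hT : 0 ≤ T) {j : ℕ} (hj : j < k) :
    Icc (gridPoint T k j) (gridPoint T k (j + 1)) ⊆ Icc 0 T := by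
  have h : Icc (gridPoint T k j) (gridPoint T k (j + 1)) ⊆
      Icc (gridPoint T k 0) (gridPoint T k k) :=
    Icc_subset_Icc (gridPoint_mono hT (Nat.zero_le j)) (gridPoint_mono hT hj)
  rwa [gridPoint_zero, gridPoint_self (by omega)] at h

theorem intervalIntegrable_gridPiece {f : ℝ → ℝ} (hT : 0 ≤ T) {j : ℕ} (hj : j < k)
    (hf : IntervalIntegrable f volume 0 T) :
    IntervalIntegrable f volume (gridPoint T k j) (gridPoint T k (j + 1)) := by
  refine hf.mono_set ?_
  rw [uIcc_of_le hT, uIcc_of_le (gridPoint_mono hT j.le_succ)]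
  exact Icc_gridPoint_subset hT hj

theorem intervalIntegral_eq_sum_gridPoint {f : ℝ → ℝ} (hT : 0 ≤ T) (hk : k ≠ 0)
    (hf : IntervalIntegrable f volume 0 T) :
    ∫ t in 0..T, f t =
      ∑ j ∈ Finset.range k, ∫ t in gridPoint T k j..gridPoint T k (j + 1), f t := by
  rw [intervalIntegral.sum_integral_adjacent_intervals, gridPoint_zero, gridPoint_self hk]
  exact fun j hj => intervalIntegrable_gridPiece hT hj hf

theorem abs_pieceIntegral_sub_le {v v' : ℝ → ℝ} (hT : 0 ≤ T) {j : ℕ} (hj : j < k)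
    (hv : IntervalIntegrable v volume 0 T) (hv' : IntervalIntegrable v' volume 0 T) :
    |pieceIntegral T k v j - pieceIntegral T k v' j| ≤
      ∫ t in gridPoint T k j..gridPoint T k (j + 1), |v t - v' t| := by
  rw [pieceIntegral, pieceIntegral, ← intervalIntegral.integral_sub
    (intervalIntegrable_gridPiece hT hj hv) (intervalIntegrable_gridPiece hT hj hv')]
  exact intervalIntegral.abs_integral_le_integral_abs (gridPoint_mono hT j.le_succ)

theorem pieceIntegral_mem_Icc {v : ℝ → ℝ} {δ : ℝ} (hT : 0 ≤ T) {j : ℕ} (hj : j < k)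
    (hv : IntervalIntegrable v volume 0 T) (hrange : ∀ t ∈ Icc 0 T, v t ∈ Icc 0 δ) :
    pieceIntegral T k v j ∈ Icc 0 (δ * (T / k)) := by
  have hle : gridPoint T k j ≤ gridPoint T k (j + 1) := gridPoint_mono hT j.le_succ
  have hmem : ∀ t ∈ Icc (gridPoint T k j) (gridPoint T k (j + 1)), v t ∈ Icc 0 δ :=
    fun t ht => hrange t (Icc_gridPoint_subset hT hj ht)
  refine ⟨intervalIntegral.integral_nonneg hle fun t ht => (hmem t ht).1, ?_⟩
  calc pieceIntegral T k v j ≤ ∫ _ in gridPoint T k j..gridPoint T k (j + 1), δ :=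
        intervalIntegral.integral_mono_on hle (intervalIntegrable_gridPiece hT hj hv)
          intervalIntegrable_const fun t ht => (hmem t ht).2
    _ = δ * (T / k) := by
      rw [intervalIntegral.integral_const, gridPoint_succ_sub, smul_eq_mul, mul_comm]

end Grid

theorem bangBang_eq_indicator (T a : ℝ) (k : ℕ) (v : ℝ → ℝ) :
    bangBang T a k v =
      (⋃ j ∈ Finset.range k, Ico (switchTime T a k v j) (gridPoint T k (j + 1))).indicator
        fun _ => a := by
  ext t
  simp only [bangBang, indicator, switchTime, pieceIntegral, gridPoint, mem_iUnion, mem_Ico,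
    Finset.mem_range, exists_prop, Nat.cast_succ]

theorem intervalIntegrable_bangBang (T a : ℝ) (k : ℕ) (v : ℝ → ℝ) (p q : ℝ) :
    IntervalIntegrable (bangBang T a k v) volume p q := by
  rw [bangBang_eq_indicator, intervalIntegrable_iff]
  exact (integrableOn_const measure_Ioc_lt_top.ne).indicator
    (Finset.measurableSet_biUnion _ fun _ _ => measurableSet_Ico)

section BangBang

variable {T a : ℝ} {k : ℕ}

theorem bangBang_eq_ite_of_mem_Ico {v : ℝ → ℝ} (hT : 0 ≤ T)
    (hv : ∀ j < k, gridPoint T k j ≤ switchTime T a k v j) {h : ℕ} (hh : h < k) {t : ℝ}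
    (ht : t ∈ Ico (gridPoint T k h) (gridPoint T k (h + 1))) :
    bangBang T a k v t = if switchTime T a k v h ≤ t then a else 0 := by
  rw [bangBang_eq_indicator, indicator_apply,
    mem_biUnion_Ico_iff_of_mem_Ico (gridPoint_mono hT) hv hh ht]

theorem switchTime_mem_Icc {v : ℝ → ℝ} (ha : 0 < a) {j : ℕ}
    (hU : pieceIntegral T k v j ∈ Icc 0 (a * (T / k))) :
    switchTime T a k v j ∈ Icc (gridPoint T k j) (gridPoint T k (j + 1)) := by
  have hdiv : pieceIntegral T k v j / a ∈ Icc 0 (T / k) :=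
    ⟨div_nonneg hU.1 ha.le, (div_le_iff₀' ha).2 hU.2⟩
  have := gridPoint_succ_sub (T := T) (k := k) j
  unfold switchTime
  constructor <;> linarith [hdiv.1, hdiv.2]

theorem integral_abs_bangBang_sub_gridPiece {v v' : ℝ → ℝ} (hT : 0 ≤ T) (ha : 0 < a)
    (hv : ∀ j < k, switchTime T a k v j ∈ Icc (gridPoint T k j) (gridPoint T k (j + 1)))
    (hv' : ∀ j < k, switchTime T a k v' j ∈ Icc (gridPoint T k j) (gridPoint T k (j + 1)))
    {h : ℕ} (hh : h < k) :
    ∫ t in gridPoint T k h..gridPoint T k (h + 1),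
        |bangBang T a k v t - bangBang T a k v' t| =
      |pieceIntegral T k v h - pieceIntegral T k v' h| := by
  rw [intervalIntegral_congr_Ico (gridPoint_mono hT h.le_succ) fun t ht => by
      rw [bangBang_eq_ite_of_mem_Ico hT (fun j hj => (hv j hj).1) hh ht,
        bangBang_eq_ite_of_mem_Ico hT (fun j hj => (hv' j hj).1) hh ht],
    integral_abs_ite_sub_ite (hv h hh) (hv' h hh) ha.le, switchTime, switchTime,
    sub_sub_sub_cancel_left, ← sub_div, abs_div, abs_of_pos ha, mul_div_cancel₀ _ ha.ne',
    abs_sub_comm]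

end BangBang

/-- the map `u ↦ w_u` is `1`-Lipschitz for the `L¹` topology. -/
theorem bangBang_lipschitz
    (T δ a : ℝ) (hT : 0 < T) (hδ : 0 < δ) (ha : δ < a)
    (k : ℕ) (hk : 1 ≤ k)
    (u u' : ℝ → ℝ)
    (hu : PiecewiseConstOn u T) (hu' : PiecewiseConstOn u' T)
    (hurange : ∀ t ∈ Set.Icc (0 : ℝ) T, u t ∈ Set.Icc (0 : ℝ) δ)
    (hu'range : ∀ t ∈ Set.Icc (0 : ℝ) T, u' t ∈ Set.Icc (0 : ℝ) δ) :
    (∫ s in (0 : ℝ)..T, |bangBang T a k u s - bangBang T a k u' s|) ≤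
      ∫ s in (0 : ℝ)..T, |u s - u' s| := by
  have ha0 : 0 < a := hδ.trans ha
  have hk0 : k ≠ 0 := by omega
  have hui := hu.intervalIntegrable
  have hu'i := hu'.intervalIntegrable
  have hswitch : ∀ v : ℝ → ℝ, IntervalIntegrable v volume 0 T →
      (∀ t ∈ Icc 0 T, v t ∈ Icc 0 δ) →
      ∀ j < k, switchTime T a k v j ∈ Icc (gridPoint T k j) (gridPoint T k (j + 1)) := by
    intro v hv hrange j hj
    obtain ⟨h0, h1⟩ := pieceIntegral_mem_Icc hT.le hj hv hrange
    exact switchTime_mem_Icc ha0 ⟨h0, h1.trans (by gcongr)⟩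
  rw [intervalIntegral_eq_sum_gridPoint hT.le hk0
      ((intervalIntegrable_bangBang T a k u 0 T).sub
        (intervalIntegrable_bangBang T a k u' 0 T)).abs,
    intervalIntegral_eq_sum_gridPoint hT.le hk0 (hui.sub hu'i).abs]
  refine Finset.sum_le_sum fun j hj => ?_
  rw [integral_abs_bangBang_sub_gridPiece hT.le ha0 (hswitch u hui hurange)
    (hswitch u' hu'i hu'range) (Finset.mem_range.1 hj)]
  exact abs_pieceIntegral_sub_le hT.le (Finset.mem_range.1 hj) hui hu'i
end

section
/- Fix a sequence of real numbers (λ_k)_{k≥1} and a family b : ℕ×ℕ → ℂ. Fix n ∈ ℕ, set A^{(n)} = −i·H0^{(n)} and B^{(n)} = −i·(H1^{(n)} − H0^{(n)}), let Σ_n = {|λ_l − λ_k| : 1 ≤ l,k ≤ n} and Ξ_n = {σ ∈ Σ_n : b(k,l) = 0 for all k ≤ n < l with |λ_l − λ_k| = σ}, and assume 0 ∈ Ξ_n. Define W_n = {A^{(n)}} ∪ {E_0(B^{(n)})} ∪ {E_0(B^{(n)}) + ν·E_σ(B^{(n)}) : σ ∈ Ξ_n, σ ≠ 0, ν ∈ (−1/2,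 1/2)} and V_n = {A^{(n)}} ∪ {E_σ(B^{(n)}) : σ ∈ Ξ_n}. Then the smallest real Lie subalgebra of the n×n complex matrices containing W_n equals the smallest real Lie subalgebra containing V_n. -/
open scoped Classical

attribute [local instance 100] LieRing.ofAssociativeRing

/-- `H0^{(n)}` : the `n×n` diagonal matrix `diag(λ_1, …, λ_n)`. -/
noncomputable def H0mat (lam : ℕ → ℝ) (n : ℕ) : Matrix (Fin n) (Fin n) ℂ :=
  Matrix.diagonal fun k => (lam ((k : ℕ) + 1) : ℂ)

/-- `H1^{(n)}` : the `n×n` matrix with `(l,k)`-entry `b l k` for `1 ≤ l,k ≤ n`. -/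
noncomputable def H1mat (b : ℕ → ℕ → ℂ) (n : ℕ) : Matrix (Fin n) (Fin n) ℂ :=
  fun l k => b ((l : ℕ) + 1) ((k : ℕ) + 1)

/-- `E_σ(M)` : the matrix obtained from `M` by keeping the `(l,k)`-entries with
`|λ_l - λ_k| = σ` and setting the other entries to `0`. -/
noncomputable def Esel (lam : ℕ → ℝ) (σ : ℝ) {n : ℕ} (M : Matrix (Fin n) (Fin n) ℂ) :
    Matrix (Fin n) (Fin n) ℂ :=
  fun l k => if |lam ((l : ℕ) + 1) - lam ((k : ℕ) + 1)| = σ then M l k else 0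

/-- `Σ_n` : the set of spectral gaps associated with the first `n` eigenvalues. -/
def Sigma_n (lam : ℕ → ℝ) (n : ℕ) : Set ℝ :=
  {σ : ℝ | ∃ l k : ℕ, 1 ≤ l ∧ l ≤ n ∧ 1 ≤ k ∧ k ≤ n ∧ σ = |lam l - lam k|}

/-- `Ξ_n` : the set of spectral gaps `σ ∈ Σ_n` for which there is no coupling through
the gap `σ` between the first `n` levels and the higher levels. -/
def Xi_n (lam : ℕ → ℝ) (b : ℕ → ℕ → ℂ) (n : ℕ) : Set ℝ :=
  {σ ∈ Sigma_n lam n |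
    ∀ k l : ℕ, 1 ≤ k → k ≤ n → n < l → |lam l - lam k| = σ → b k l = 0}

theorem LieSubalgebra.mem_of_add_smul_mem {K L : Type*} [Field K] [LieRing L] [LieAlgebra K L]
    {S : LieSubalgebra K L} {x y : L} {ν : K} (hν : ν ≠ 0) (hx : x ∈ S) (hxy : x + ν • y ∈ S) :
    y ∈ S := by
  have hy : y = ν⁻¹ • ((x + ν • y) - x) := by
    rw [add_sub_cancel_left, smul_smul, inv_mul_cancel₀ hν, one_smul]
  exact hy ▸ S.smul_mem _ (sub_mem hxy hx)

theorem lieSpan_W_eq_lieSpan_V_general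
    (lam : ℕ → ℝ) (b : ℕ → ℕ → ℂ) (n : ℕ)
    (A B : Matrix (Fin n) (Fin n) ℂ)
    (h0 : (0 : ℝ) ∈ Xi_n lam b n) :
    LieSubalgebra.lieSpan ℝ (Matrix (Fin n) (Fin n) ℂ)
        ({A} ∪ {Esel lam 0 B} ∪
          {M | ∃ σ ∈ Xi_n lam b n, σ ≠ 0 ∧
            ∃ ν ∈ Set.Ioo (-(1 / 2) : ℝ) (1 / 2),
              M = Esel lam 0 B + ν • Esel lam σ B}) =
      LieSubalgebra.lieSpan ℝ (Matrix (Fin n) (Fin n) ℂ)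
        ({A} ∪ {M | ∃ σ ∈ Xi_n lam b n, M = Esel lam σ B}) := by
  apply le_antisymm <;> rw [LieSubalgebra.lieSpan_le]
  · have hE : ∀ σ ∈ Xi_n lam b n, Esel lam σ B ∈ LieSubalgebra.lieSpan ℝ _
        ({A} ∪ {M | ∃ σ ∈ Xi_n lam b n, M = Esel lam σ B}) :=
      fun σ hσ => LieSubalgebra.subset_lieSpan (Or.inr ⟨σ, hσ, rfl⟩)
    rintro M (((rfl : M = A) | (rfl : M = Esel lam 0 B)) | ⟨σ, hσ, -, ν, -, rfl⟩)
    · exact LieSubalgebra.subset_lieSpan (Or.inl rfl)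
    · exact hE 0 h0
    · exact add_mem (hE 0 h0) (LieSubalgebra.smul_mem _ ν (hE σ hσ))
  · rintro M ((rfl : M = A) | ⟨σ, hσ, rfl⟩)
    · exact LieSubalgebra.subset_lieSpan (Or.inl (Or.inl rfl))
    obtain rfl | hσ₀ := eq_or_ne σ 0
    · exact LieSubalgebra.subset_lieSpan (Or.inl (Or.inr rfl))
    exact LieSubalgebra.mem_of_add_smul_mem (x := Esel lam 0 B) (ν := (1 / 4 : ℝ)) (by norm_num)
      (LieSubalgebra.subset_lieSpan (Or.inl (Or.inr rfl)))
      (LieSubalgebra.subset_lieSpan (Or.inr ⟨σ, hσ, hσ₀, 1 / 4, ⟨by norm_num, by norm_num⟩, rfl⟩))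

/-- the real Lie algebra generated by
`W_n = {A^{(n)}} ∪ {E_0(B^{(n)})} ∪ {E_0(B^{(n)}) + ν E_σ(B^{(n)}) : σ ∈ Ξ_n, σ ≠ 0, |ν| < 1/2}`
equals the real Lie algebra generated by `V_n = {A^{(n)}} ∪ {E_σ(B^{(n)}) : σ ∈ Ξ_n}`,
provided `0 ∈ Ξ_n`. -/
theorem lieSpan_W_eq_lieSpan_V
    (lam : ℕ → ℝ) (b : ℕ → ℕ → ℂ) (n : ℕ)
    (A B : Matrix (Fin n) (Fin n) ℂ)
    (hA : A = (-Complex.I) • H0mat lam n)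
    (hB : B = (-Complex.I) • (H1mat b n - H0mat lam n))
    (h0 : (0 : ℝ) ∈ Xi_n lam b n) :
    LieSubalgebra.lieSpan ℝ (Matrix (Fin n) (Fin n) ℂ)
        ({A} ∪ {Esel lam 0 B} ∪
          {M | ∃ σ ∈ Xi_n lam b n, σ ≠ 0 ∧
            ∃ ν ∈ Set.Ioo (-(1 / 2) : ℝ) (1 / 2),
              M = Esel lam 0 B + ν • Esel lam σ B}) =
      LieSubalgebra.lieSpan ℝ (Matrix (Fin n) (Fin n) ℂ)
        ({A} ∪ {M | ∃ σ ∈ Xi_n lam b n, M = Esel lam σ B}) :=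
  lieSpan_W_eq_lieSpan_V_general lam b n A B h0
end
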